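/- arXiv:2404.14751 — 5 statements merged into one kernel-verified Lean document; each statement's English description precedes it below -/
import Mathlib

section
/- Let Σ be a p×p real symmetric positive definite matrix, let {u_i}_{i=1}^p be an orthonormal basis of ℝ^p, set φ_i = (u_iᵀ Σ⁻¹ u_i)⁻¹ and Σ̃ = Σ_{i=1}^p φ_i u_i u_iᵀ. Then tr[(Σ̃ − Σ)² Σ⁻¹] = tr(Σ) − Σ_{i=1}^p φ_i. -/
open Matrix

/-! Orthonormality of the `uᵢ` makes `Σ̃² = ∑ φᵢ² uᵢuᵢᵀ`, so
`tr(Σ̃² Σ⁻¹) = ∑ φᵢ² uᵢᵀΣ⁻¹uᵢ = ∑ φᵢ` and `tr Σ̃ = ∑ φᵢ`; expanding the square,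
`tr[(Σ̃ - Σ)² Σ⁻¹] = tr(Σ̃² Σ⁻¹) - 2 tr Σ̃ + tr Σ`. -/

namespace Matrix

variable {R n ι : Type*} [CommRing R] [Fintype n] [Fintype ι]

theorem trace_sub_mul_sub_mul_inv [DecidableEq n] {T S : Matrix n n R} (hS : IsUnit S.det) :
    trace ((T - S) * (T - S) * S⁻¹) = trace (T * T * S⁻¹) - 2 * trace T + trace S := by
  have expand : (T - S) * (T - S) * S⁻¹
      = T * T * S⁻¹ - T * (S * S⁻¹) - S * T * S⁻¹ + S * (S * S⁻¹) := by
    noncomm_ring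
  have conj : trace (S * T * S⁻¹) = trace T := by
    rw [trace_mul_cycle, nonsing_inv_mul S hS, one_mul]
  rw [expand, mul_nonsing_inv S hS, mul_one, mul_one, trace_add, trace_sub, trace_sub, conj]
  ring

theorem trace_sum_smul_vecMulVec_mul (u : ι → n → R) (c : ι → R) (M : Matrix n n R) :
    trace ((∑ i, c i • vecMulVec (u i) (u i)) * M) = ∑ i, c i * (u i ⬝ᵥ M *ᵥ u i) := by
  simp only [Finset.sum_mul, trace_sum, smul_mul_assoc, trace_smul, vecMulVec_mul,
    trace_vecMulVec, smul_eq_mul]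
  refine Finset.sum_congr rfl fun i _ => ?_
  rw [dotProduct_mulVec, dotProduct_comm]

variable [DecidableEq ι] {u : ι → n → R}
  (hu : ∀ i j, u i ⬝ᵥ u j = if i = j then 1 else 0)
include hu

theorem trace_sum_smul_vecMulVec_of_orthonormal (c : ι → R) :
    trace (∑ i, c i • vecMulVec (u i) (u i)) = ∑ i, c i := by
  simp [trace_sum, hu]

theorem sum_smul_vecMulVec_mul_sum_smul_vecMulVec_of_orthonormal (c d : ι → R) :
    (∑ i, c i • vecMulVec (u i) (u i)) * (∑ j, d j • vecMulVec (u j) (u j))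
      = ∑ i, (c i * d i) • vecMulVec (u i) (u i) := by
  have projection : ∀ i j, vecMulVec (u i) (u i) * vecMulVec (u j) (u j)
      = if i = j then vecMulVec (u i) (u i) else 0 := by
    intro i j
    rw [vecMulVec_mul_vecMulVec, hu]
    split_ifs with hij
    · rw [one_smul, hij]
    · rw [zero_smul, vecMulVec_zero]
  simp only [Finset.sum_mul, Finset.mul_sum, smul_mul_smul_comm, projection, smul_ite, smul_zero,
    Finset.sum_ite_eq', Finset.mem_univ, if_true]

end Matrix

/-- Weighted-Frobenius-loss decomposition for the invariant estimator with shrinkers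
`φᵢ = (uᵢᵀ Σ⁻¹ uᵢ)⁻¹`:  `tr[(Σ̃ - Σ)² Σ⁻¹] = tr Σ - ∑ φᵢ`. -/
theorem statement3 (p : ℕ) (S : Matrix (Fin p) (Fin p) ℝ) (hS : S.PosDef)
    (u : Fin p → Fin p → ℝ)
    (hu : ∀ i j, u i ⬝ᵥ u j = if i = j then (1 : ℝ) else 0)
    (φ : Fin p → ℝ) (hφ : ∀ i, φ i = (u i ⬝ᵥ S⁻¹ *ᵥ u i)⁻¹)
    (T : Matrix (Fin p) (Fin p) ℝ) (hT : T = ∑ i, φ i • vecMulVec (u i) (u i)) :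
    Matrix.trace ((T - S) * (T - S) * S⁻¹) = Matrix.trace S - ∑ i, φ i := by
  have hdet : IsUnit S.det := isUnit_iff_ne_zero.2 hS.det_pos.ne'
  have shrink : ∀ i, φ i * φ i * (u i ⬝ᵥ S⁻¹ *ᵥ u i) = φ i := fun i => by
    rw [hφ i]
    simpa only [inv_inv] using mul_self_mul_inv (u i ⬝ᵥ S⁻¹ *ᵥ u i)⁻¹
  rw [trace_sub_mul_sub_mul_inv hdet, hT,
    sum_smul_vecMulVec_mul_sum_smul_vecMulVec_of_orthonormal hu, trace_sum_smul_vecMulVec_mul,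
    trace_sum_smul_vecMulVec_of_orthonormal hu]
  simp only [shrink]
  ring
end

section
/- Let Σ be a p×p real symmetric positive definite matrix, let {u_i}_{i=1}^p be an orthonormal basis of ℝ^p, set φ_i = u_iᵀ Σ u_i and Σ̃ = Σ_{i=1}^p φ_i u_i u_iᵀ. Then tr[(Σ̃⁻¹ − Σ⁻¹)² Σ] = tr(Σ⁻¹) − Σ_{i=1}^p φ_i⁻¹. -/
/-!
In the orthonormal frame `u`, `Σ̃ = ∑ φᵢ uᵢuᵢᵀ` is diagonal, so `Σ̃⁻¹ = ∑ φᵢ⁻¹ uᵢuᵢᵀ` and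
`tr Σ̃⁻¹ = ∑ φᵢ⁻¹`. Expanding the square, `tr[(Σ̃⁻¹ - Σ⁻¹)² Σ] = tr(Σ̃⁻² Σ) - 2 tr Σ̃⁻¹ + tr Σ⁻¹`,
and `tr(Σ̃⁻² Σ) = ∑ φᵢ⁻² uᵢᵀ Σ uᵢ = ∑ φᵢ⁻¹` precisely because the shrinkers are `φᵢ = uᵢᵀ Σ uᵢ`.
-/

open Matrix

namespace Matrix

section CommRing

variable {ι n R : Type*} [Fintype ι] [Fintype n] [CommRing R]

def spectralSum (u : ι → n → R) (c : ι → R) : Matrix n n R :=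
  ∑ i, c i • vecMulVec (u i) (u i)

theorem spectralSum_mul_spectralSum [DecidableEq ι] {u : ι → n → R}
    (hu : ∀ i j, u i ⬝ᵥ u j = if i = j then 1 else 0) (c d : ι → R) :
    spectralSum u c * spectralSum u d = spectralSum u (c * d) := by
  simp only [spectralSum, Finset.sum_mul_sum, smul_mul_smul_comm, vecMulVec_mul_vecMulVec,
    vecMulVec_smul, smul_smul]
  simp only [hu, mul_ite, mul_one, mul_zero, ite_smul, zero_smul, Finset.sum_ite_eq,
    Finset.mem_univ, if_true, Pi.mul_apply]

theorem spectralSum_one [DecidableEq n] {u : n → n → R}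
    (hu : ∀ i j, u i ⬝ᵥ u j = if i = j then 1 else 0) :
    spectralSum u 1 = 1 := by
  have hUUt : of u * (of u)ᵀ = 1 := by
    ext i j
    simpa [mul_apply, dotProduct, one_apply] using hu i j
  -- a square matrix with orthonormal rows also has orthonormal columns
  rw [← mul_eq_one_comm.mp hUUt]
  ext k l
  simp [spectralSum, sum_apply, vecMulVec_apply, mul_apply]

theorem trace_spectralSum_mul (u : ι → n → R) (c : ι → R) (A : Matrix n n R) :
    trace (spectralSum u c * A) = ∑ i, c i * (u i ⬝ᵥ A *ᵥ u i) := by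
  simp only [spectralSum, Finset.sum_mul, trace_sum, smul_mul_assoc, trace_smul, vecMulVec_mul,
    trace_vecMulVec, smul_eq_mul]
  refine Finset.sum_congr rfl fun i _ => ?_
  rw [dotProduct_comm, dotProduct_mulVec]

theorem trace_spectralSum [DecidableEq ι] [DecidableEq n] {u : ι → n → R}
    (hu : ∀ i j, u i ⬝ᵥ u j = if i = j then 1 else 0) (c : ι → R) :
    trace (spectralSum u c) = ∑ i, c i := by
  simpa [hu] using trace_spectralSum_mul u c 1

theorem trace_sub_inv_mul_sub_inv_mul [DecidableEq n] {S : Matrix n n R} (hS : IsUnit S.det)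
    (M : Matrix n n R) :
    trace ((M - S⁻¹) * (M - S⁻¹) * S) = trace (M * M * S) - 2 * trace M + trace S⁻¹ := by
  have hexp : (M - S⁻¹) * (M - S⁻¹) * S
      = M * M * S - M * (S⁻¹ * S) - S⁻¹ * M * S + S⁻¹ * (S⁻¹ * S) := by
    noncomm_ring
  rw [hexp, nonsing_inv_mul S hS, mul_one, mul_one, trace_add, trace_sub, trace_sub,
    trace_mul_cycle S⁻¹, mul_nonsing_inv S hS, one_mul]
  ring

end CommRing

theorem spectralSum_inv {ι K : Type*} [Fintype ι] [DecidableEq ι] [Field K] {u : ι → ι → K}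
    (hu : ∀ i j, u i ⬝ᵥ u j = if i = j then 1 else 0) {c : ι → K} (hc : ∀ i, c i ≠ 0) :
    (spectralSum u c)⁻¹ = spectralSum u c⁻¹ := by
  refine inv_eq_right_inv ?_
  have hcc : c * c⁻¹ = 1 := funext fun i => mul_inv_cancel₀ (hc i)
  rw [spectralSum_mul_spectralSum hu, hcc, spectralSum_one hu]

end Matrix

/-- Disutility-loss decomposition for the invariant estimator with shrinkers
`φᵢ = uᵢᵀ Σ uᵢ`:  `tr[(Σ̃⁻¹ - Σ⁻¹)² Σ] = tr Σ⁻¹ - ∑ φᵢ⁻¹`. -/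
theorem statement4 (p : ℕ) (S : Matrix (Fin p) (Fin p) ℝ) (hS : S.PosDef)
    (u : Fin p → Fin p → ℝ)
    (hu : ∀ i j, u i ⬝ᵥ u j = if i = j then (1 : ℝ) else 0)
    (φ : Fin p → ℝ) (hφ : ∀ i, φ i = u i ⬝ᵥ S *ᵥ u i)
    (T : Matrix (Fin p) (Fin p) ℝ) (hT : T = ∑ i, φ i • vecMulVec (u i) (u i)) :
    Matrix.trace ((T⁻¹ - S⁻¹) * (T⁻¹ - S⁻¹) * S)
      = Matrix.trace S⁻¹ - ∑ i, (φ i)⁻¹ := by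
  have hu_ne : ∀ i, u i ≠ 0 := fun i h => by simpa [h] using hu i i
  have hφ_ne : ∀ i, φ i ≠ 0 := fun i => by
    simpa [hφ] using (hS.dotProduct_mulVec_pos (hu_ne i)).ne'
  have hT_inv : T⁻¹ = spectralSum u φ⁻¹ := hT ▸ spectralSum_inv hu hφ_ne
  have htr_sq : trace (T⁻¹ * T⁻¹ * S) = ∑ i, (φ i)⁻¹ := by
    rw [hT_inv, spectralSum_mul_spectralSum hu, trace_spectralSum_mul]
    refine Finset.sum_congr rfl fun i _ => ?_
    rw [← hφ, Pi.mul_apply, Pi.inv_apply, inv_mul_cancel_right₀ (hφ_ne i)]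
  rw [trace_sub_inv_mul_sub_inv_mul hS.det_pos.ne'.isUnit T⁻¹, htr_sq, hT_inv,
    trace_spectralSum hu]
  simp only [Pi.inv_apply]
  ring
end

section
/- Let σ_1,…,σ_p > 0, n ≥ 1, x ∈ ℝ with x ≠ 0, and let m ∈ ℂ with Im(m) ≠ 0 satisfy x = −1/m + (1/n)Σ_{i=1}^p σ_i/(1 + m σ_i), where 1 + mσ_i ≠ 0 for all i. Then (1/n)·Σ_{i=1}^p σ_i²/|1 + m σ_i|² = 1/|m|². -/
/-!
Since `x` is real, the imaginary part of the right-hand side vanishes. With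
`Im(-1/m) = Im m / |m|²` and `Im(σ/(1 + mσ)) = -σ² Im m / |1 + mσ|²` this reads
`Im m · (1/|m|² - (1/n) ∑ σᵢ²/|1 + mσᵢ|²) = 0`, and `Im m ≠ 0` can be cancelled.
-/

namespace Complex

theorem im_neg_one_div (z : ℂ) : (-1 / z).im = z.im / normSq z := by
  simp [neg_div, inv_im]

theorem im_ofReal_div_one_add_mul_ofReal (z : ℂ) (s : ℝ) :
    ((s : ℂ) / (1 + z * s)).im = -(s ^ 2 * z.im) / normSq (1 + z * s) := by
  rw [div_im]
  simp only [ofReal_im, add_re, one_re, mul_re, ofReal_re, mul_zero, sub_zero, zero_mul, zero_div,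
    add_im, one_im, mul_im, zero_add, zero_sub]
  ring

end Complex

open Complex in
theorem statement10_general (p n : ℕ) (σ : Fin p → ℝ)
    (x : ℝ) (m : ℂ) (hm : m.im ≠ 0)
    (h : (x : ℂ) = -1 / m + (1 / (n : ℂ)) * ∑ i, (σ i : ℂ) / (1 + m * (σ i : ℂ))) :
    (1 / (n : ℝ)) * ∑ i, (σ i) ^ 2 / ‖1 + m * (σ i : ℂ)‖ ^ 2
      = 1 / ‖m‖ ^ 2 := by
  set S := ∑ i, σ i ^ 2 / normSq (1 + m * σ i)
  have him : m.im * (1 / normSq m - 1 / n * S) = 0 := by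
    have hcoef : 1 / (n : ℂ) = ((1 / n : ℝ) : ℂ) := by push_cast; rfl
    have hsum : ∑ i, -(σ i ^ 2 * m.im) / normSq (1 + m * σ i) = -m.im * S := by
      rw [Finset.mul_sum]
      exact Finset.sum_congr rfl fun i _ ↦ by ring
    have him_eq := congrArg im h
    rw [hcoef, add_im, im_ofReal_mul, im_sum] at him_eq
    simp only [ofReal_im, im_neg_one_div, im_ofReal_div_one_add_mul_ofReal, hsum] at him_eq
    linear_combination -him_eq
  simp only [← normSq_eq_norm_sq]
  linear_combination -(mul_eq_zero.mp him).resolve_left hm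

/-- Taking imaginary parts of the deformed Marchenko–Pastur self-consistent equation
`x = -1/m + (1/n) ∑ σᵢ/(1 + mσᵢ)` at a real spectral parameter `x` yields
`(1/n) ∑ σᵢ²/|1 + mσᵢ|² = 1/|m|²`. -/
theorem statement10 (p n : ℕ) (hn : 1 ≤ n) (σ : Fin p → ℝ) (hσ : ∀ i, 0 < σ i)
    (x : ℝ) (hx : x ≠ 0) (m : ℂ) (hm : m.im ≠ 0)
    (hmi : ∀ i, (1 : ℂ) + m * (σ i : ℂ) ≠ 0)
    (h : (x : ℂ) = -1 / m + (1 / (n : ℂ)) * ∑ i, (σ i : ℂ) / (1 + m * (σ i : ℂ))) :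
    (1 / (n : ℝ)) * ∑ i, (σ i) ^ 2 / ‖1 + m * (σ i : ℂ)‖ ^ 2
      = 1 / ‖m‖ ^ 2 :=
  statement10_general p n σ x m hm h
end

section
/- For p ∈ ℕ, define the function ℒ : ℕ → ℝ by ℒ(k) = Π_{i=1}^k (1 − 1/(2i)) (with ℒ(0) = 1), and for a configuration ξ : {1,…,p} → ℕ define π(ξ) = Π_{i=1}^p ℒ(ξ(i)). Then for any k ≠ l ∈ {1,…,p} with ξ(k) ≥ 1, letting ξ^{k→l} denote the configuration obtained from ξ by decreasing ξ(k) by 1 and increasing ξ(l) by 1, the detailed balance identity holds: π(ξ) · ξ(k) · (1 + 2ξ(l)) = π(ξ^{k→l}) · (ξ(l) + 1) · (1 + 2(ξ(k) − 1)). -/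
open Finset

/-- The weight of a single site: `ℒ(k) = ∏_{i=1}^k (1 - 1/(2i))`. -/
noncomputable def siteWeight (k : ℕ) : ℝ :=
  ∏ i ∈ Finset.range k, (1 - 1 / (2 * ((i : ℝ) + 1)))

/-- The reversible measure on configurations: `π(ξ) = ∏ᵢ ℒ(ξ(i))`. -/
noncomputable def configWeight {p : ℕ} (ξ : Fin p → ℕ) : ℝ :=
  ∏ i, siteWeight (ξ i)

lemma siteWeight_succ (n : ℕ) :
    siteWeight (n + 1) * (2 * (n : ℝ) + 2) = siteWeight n * (2 * (n : ℝ) + 1) := by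
  have h : (2 * ((n : ℝ) + 1)) ≠ 0 := by positivity
  rw [siteWeight, Finset.prod_range_succ, ← siteWeight]
  field_simp
  ring

lemma key (a b : ℕ) (ha : 1 ≤ a) :
    siteWeight a * siteWeight b * (a : ℝ) * (1 + 2 * (b : ℝ))
      = siteWeight (a - 1) * siteWeight (b + 1) * ((b : ℝ) + 1)
        * (1 + 2 * ((a : ℝ) - 1)) := by
  obtain ⟨m, rfl⟩ : ∃ m, a = m + 1 := ⟨a - 1, (Nat.succ_pred_eq_of_pos ha).symm⟩
  have h1 := siteWeight_succ m
  have h2 := siteWeight_succ b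
  simp only [Nat.add_sub_cancel]
  push_cast
  linear_combination (siteWeight b * (1 + 2 * (b : ℝ)) / 2) * h1
    - (siteWeight m * (1 + 2 * (m : ℝ)) / 2) * h2

/-- Detailed balance for the eigenvector moment flow measure:
`π(ξ) ξ(k) (1 + 2ξ(l)) = π(ξ^{k→l}) (ξ(l) + 1) (1 + 2(ξ(k) - 1))`. -/
theorem statement13 (p : ℕ) (ξ : Fin p → ℕ) (k l : Fin p) (hkl : k ≠ l)
    (hk : 1 ≤ ξ k) :
    configWeight ξ * (ξ k : ℝ) * (1 + 2 * (ξ l : ℝ))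
      = configWeight (Function.update (Function.update ξ k (ξ k - 1)) l (ξ l + 1))
          * ((ξ l : ℝ) + 1) * (1 + 2 * ((ξ k : ℝ) - 1)) := by
  have hsub : ({k, l} : Finset (Fin p)) ⊆ univ := Finset.subset_univ _
  have hsplit : ∀ f : Fin p → ℕ, configWeight f
      = siteWeight (f k) * siteWeight (f l) * ∏ i ∈ univ \ {k, l}, siteWeight (f i) := by
    intro f
    rw [configWeight, ← Finset.prod_sdiff hsub, Finset.prod_pair hkl]
    ring
  set g := Function.update (Function.update ξ k (ξ k - 1)) l (ξ l + 1) with hg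
  have hgk : g k = ξ k - 1 := by
    rw [hg, Function.update_of_ne hkl, Function.update_self]
  have hgl : g l = ξ l + 1 := by rw [hg, Function.update_self]
  have hrest : ∀ i ∈ univ \ ({k, l} : Finset (Fin p)), siteWeight (g i) = siteWeight (ξ i) := by
    intro i hi
    simp only [Finset.mem_sdiff, Finset.mem_insert, Finset.mem_singleton, not_or] at hi
    rw [hg, Function.update_of_ne hi.2.2, Function.update_of_ne hi.2.1]
  rw [hsplit ξ, hsplit g, hgk, hgl, Finset.prod_congr rfl hrest]
  have := key (ξ k) (ξ l) hk
  linear_combination (∏ i ∈ univ \ ({k, l} : Finset (Fin p)), siteWeight (ξ i)) * this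
end

section
/- Fix two distinct indices k, l and nonnegative integers a = ξ(k), b = ξ(l). Define, for variables z_k, z_l, the operator X = z_k ∂/∂z_l − z_l ∂/∂z_k and the normalized monomials Q(a,b) = z_k^{2a} z_l^{2b} / ((2a−1)!!(2b−1)!!). Then X² Q(a,b) = 2a(2b+1)·(Q(a−1, b+1) − Q(a,b)) + 2b(2a+1)·(Q(a+1, b−1) − Q(a,b)), where Q with a negative argument is interpreted as 0 and (−1)!! = 1. -/
open MvPolynomial

/-- The rotation generator `X = z_k ∂/∂z_l - z_l ∂/∂z_k` (here `k = 0`, `l = 1`). -/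
noncomputable def rotOp (f : MvPolynomial (Fin 2) ℝ) : MvPolynomial (Fin 2) ℝ :=
  MvPolynomial.X 0 * MvPolynomial.pderiv 1 f - MvPolynomial.X 1 * MvPolynomial.pderiv 0 f

/-- The normalized even monomial `Q(a,b) = z_k^{2a} z_l^{2b} / ((2a-1)!!(2b-1)!!)`,
with `(-1)!! = 1` (so `(2a-1)` is natural subtraction, giving `0!! = 1` at `a = 0`). -/
noncomputable def normMonomial (a b : ℕ) : MvPolynomial (Fin 2) ℝ :=
  (1 / ((Nat.doubleFactorial (2 * a - 1) : ℝ) * (Nat.doubleFactorial (2 * b - 1) : ℝ))) •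
    (MvPolynomial.X 0 ^ (2 * a) * MvPolynomial.X 1 ^ (2 * b))

lemma pd1 (n : ℕ) : pderiv (R := ℝ) (σ := Fin 2) 1 (X 1 ^ n) = (n:ℝ) • X 1 ^ (n-1) := by
  cases n with
  | zero => simp
  | succ n => simp [smul_eq_C_mul]

lemma pd0 (m : ℕ) : pderiv (R := ℝ) (σ := Fin 2) 0 (X 0 ^ m) = (m:ℝ) • X 0 ^ (m-1) := by
  cases m with
  | zero => simp
  | succ m => simp [smul_eq_C_mul]

lemma rot_mon (m n : ℕ) : rotOp (X 0 ^ m * X 1 ^ n)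
    = (n:ℝ) • (X 0 ^ (m+1) * X 1 ^ (n-1)) - (m:ℝ) • (X 0 ^ (m-1) * X 1 ^ (n+1)) := by
  simp only [rotOp, pderiv_mul, pd0, pd1]
  have h0 : pderiv (R := ℝ) (σ := Fin 2) 0 (X 1 ^ n) = 0 := by
    cases n with | zero => simp | succ n => simp
  have h1 : pderiv (R := ℝ) (σ := Fin 2) 1 (X 0 ^ m) = 0 := by
    cases m with | zero => simp | succ m => simp
  rw [h0, h1]
  simp [smul_eq_C_mul, pow_succ]
  ring

lemma rot_smul (c : ℝ) (p : MvPolynomial (Fin 2) ℝ) : rotOp (c • p) = c • rotOp p := by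
  simp [rotOp, smul_sub, mul_smul_comm]

lemma rot_sub (p q : MvPolynomial (Fin 2) ℝ) : rotOp (p - q) = rotOp p - rotOp q := by
  simp [rotOp]; ring

lemma rot2_mon (m n : ℕ) : rotOp (rotOp (X 0 ^ m * X 1 ^ n))
    = ((n:ℝ)*((n:ℝ)-1)) • (X 0 ^ (m+2) * X 1 ^ (n-2))
      - ((n:ℝ)*((m:ℝ)+1) + (m:ℝ)*((n:ℝ)+1)) • (X 0 ^ m * X 1 ^ n)
      + ((m:ℝ)*((m:ℝ)-1)) • (X 0 ^ (m-2) * X 1 ^ (n+2)) := by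
  rw [rot_mon, rot_sub, rot_smul, rot_smul, rot_mon, rot_mon]
  have e1 : ∀ x:ℕ, x+1-1 = x := fun x => rfl
  have e2 : ∀ x:ℕ, x+2-2 = x := fun x => rfl
  have e3 : ∀ x:ℕ, x+2-1 = x+1 := fun x => rfl
  have e4 : ∀ x:ℕ, x+1-2 = x-1 := fun x => rfl
  rcases m with _|m <;> rcases n with _|n <;>
    · try simp only [e1, e2, e3, e4, Nat.zero_sub, Nat.sub_zero]
      push_cast
      module

lemma df_ne (n : ℕ) : ((n.doubleFactorial : ℝ)) ≠ 0 := by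
  exact_mod_cast (Nat.doubleFactorial_pos n).ne'

lemma dfo (x : ℕ) :
    ((Nat.doubleFactorial (2*x+1) : ℝ)) = (2*(x:ℝ)+1) * (Nat.doubleFactorial (2*x - 1)) := by
  cases x with
  | zero => simp [Nat.doubleFactorial]
  | succ y =>
      have h : 2*(y+1)+1 = (2*y+1) + 2 := by ring
      have h2 : 2*(y+1) - 1 = 2*y+1 := by omega
      rw [h, Nat.doubleFactorial_add_two, h2]
      push_cast
      ring

lemma dfo3 (x : ℕ) :
    ((Nat.doubleFactorial (2*x+3) : ℝ))
      = (2*(x:ℝ)+3) * ((2*(x:ℝ)+1) * (Nat.doubleFactorial (2*x - 1))) := by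
  have h : 2*x+3 = (2*x+1) + 2 := by ring
  rw [h, Nat.doubleFactorial_add_two]
  push_cast
  rw [dfo]
  ring

/-- The squared rotation generator acts on normalized even monomials as the generator of
the eigenvector moment flow:
`X² Q(a,b) = 2a(2b+1)(Q(a-1,b+1) - Q(a,b)) + 2b(2a+1)(Q(a+1,b-1) - Q(a,b))`
(terms with a negative argument carry a vanishing coefficient). -/
theorem statement16 (a b : ℕ) :
    rotOp (rotOp (normMonomial a b))
      = (2 * (a : ℝ) * (2 * (b : ℝ) + 1)) • (normMonomial (a - 1) (b + 1) - normMonomial a b)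
        + (2 * (b : ℝ) * (2 * (a : ℝ) + 1)) •
            (normMonomial (a + 1) (b - 1) - normMonomial a b) := by
  have key : ∀ a b : ℕ, rotOp (rotOp (normMonomial a b))
      = (1 / ((Nat.doubleFactorial (2*a - 1) : ℝ) * (Nat.doubleFactorial (2*b - 1) : ℝ))) •
        ( ((2*(b:ℝ))*((2*(b:ℝ))-1)) • (X 0 ^ (2*a+2) * X 1 ^ (2*b-2))
          - ((2*(b:ℝ))*((2*(a:ℝ))+1) + (2*(a:ℝ))*((2*(b:ℝ))+1)) • (X 0 ^ (2*a) * X 1 ^ (2*b))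
          + ((2*(a:ℝ))*((2*(a:ℝ))-1)) • (X 0 ^ (2*a-2) * X 1 ^ (2*b+2)) ) := by
    intro a b
    rw [normMonomial, rot_smul, rot_smul, rot2_mon]
    push_cast
    ring_nf
  rw [key]
  have e2 : ∀ x:ℕ, x+2-2 = x := fun x => rfl
  have m1 : ∀ x:ℕ, 2*(x+1) = 2*x+2 := fun x => by ring
  have m2 : ∀ x:ℕ, 2*(x+2) = 2*x+4 := fun x => by ring
  have s1 : ∀ x:ℕ, 2*x+2-1 = 2*x+1 := fun x => by omega
  have s2 : ∀ x:ℕ, 2*x+4-1 = 2*x+3 := fun x => by omega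
  rcases a with _|a <;> rcases b with _|b <;>
    · simp only [normMonomial, m1, m2, e2, s1, s2, Nat.add_sub_cancel, Nat.zero_sub, Nat.sub_zero,
        Nat.succ_sub_one, dfo, dfo3]
      push_cast
      match_scalars <;>
        · field_simp
          try ring
end
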